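/- arXiv:1502.02624 — 4 statements merged into one kernel-verified Lean document; each statement's English description precedes it below -/
import Mathlib

section
/- There exists N such that for all n ≥ N and every odd integer d with 2^n − 1 < d < 3·2^{n−1} − 1, the 2-density of the set D := {i : 1 ≤ i ≤ d, i odd} \ {2^n − 1} equals 1/(n−1); that is, every solution U of any length ℓ for D satisfies (n−1)·s(U) ≥ ℓ, and some solution attains (n−1)·s(U) = ℓ. -/
/-- The binary weight `s₂(m)`: the sum of the base-2 digits of `m`. -/
def s2 (m : ℕ) : ℕ := (Nat.digits 2 m).sum

/-- The shift map on `{0, …, 2^ℓ - 1}`: it fixes `2^ℓ - 1` and sends any other `i`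
to the remainder of `2·i` modulo `2^ℓ - 1`. -/
def shift2 (ℓ i : ℕ) : ℕ := if i = 2 ^ ℓ - 1 then i else (2 * i) % (2 ^ ℓ - 1)

/-- `U : ℕ → ℕ` (supported on `D`) is a solution of length `ℓ` for `D`:
`0 ≤ u_d ≤ 2^ℓ - 1` and `∑ d·u_d` is a positive multiple of `2^ℓ - 1`. -/
structure IsSolution (D : Finset ℕ) (ℓ : ℕ) (U : ℕ → ℕ) : Prop where
  len_pos : 1 ≤ ℓ
  bounded : ∀ d, U d ≤ 2 ^ ℓ - 1
  supp_sub : ∀ d, d ∉ D → U d = 0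
  dvd : (2 ^ ℓ - 1) ∣ ∑ d ∈ D, d * U d
  pos : 0 < ∑ d ∈ D, d * U d

/-- The weight `s(U) = ∑_{d ∈ D} s₂(u_d)` of a solution. -/
def weight (D : Finset ℕ) (U : ℕ → ℕ) : ℕ := ∑ d ∈ D, s2 (U d)

/-- The support map `φ_U(k) = (∑_{d ∈ D} d·δ^k(u_d)) / (2^ℓ - 1)` of a solution,
viewed as an `ℓ`-periodic function on `ℕ`. -/
def supportMap (D : Finset ℕ) (ℓ : ℕ) (U : ℕ → ℕ) (k : ℕ) : ℕ :=
  (∑ d ∈ D, d * (shift2 ℓ)^[k] (U d)) / (2 ^ ℓ - 1)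

/-- A solution is irreducible when its support map is injective on `ℤ/ℓℤ`,
i.e. injective on `{0, …, ℓ-1}`. -/
def IrreducibleSol (D : Finset ℕ) (ℓ : ℕ) (U : ℕ → ℕ) : Prop :=
  Set.InjOn (supportMap D ℓ U) ↑(Finset.range ℓ)

/-- `U` is a shift of `V` (coordinatewise iterate of the shift map). -/
def IsShiftOf (ℓ : ℕ) (U V : ℕ → ℕ) : Prop :=
  ∃ k, ∀ d, U d = (shift2 ℓ)^[k] (V d)

/-- The set of odd integers `1 ≤ i ≤ d`. -/
def oddUpTo (d : ℕ) : Finset ℕ := (Finset.range (d + 1)).filter (fun i => i % 2 = 1)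

/-- `D = {i : 1 ≤ i ≤ 2^{n+1} - 3, i odd}`. -/
def oddD (n : ℕ) : Finset ℕ := oddUpTo (2 ^ (n + 1) - 3)

/-- The solution with `u_a = 1` and all other coordinates `0`. -/
def sol1 (a : ℕ) : ℕ → ℕ := fun d => if d = a then 1 else 0

/-- The solution with `u_a = x`, `u_b = y` and all other coordinates `0`. -/
def sol2 (a x b y : ℕ) : ℕ → ℕ := fun d => if d = a then x else if d = b then y else 0

/-- The solution with `u_a = x`, `u_b = y`, `u_c = z` and all other coordinates `0`. -/
def sol3 (a x b y c z : ℕ) : ℕ → ℕ :=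
  fun d => if d = a then x else if d = b then y else if d = c then z else 0

/-!
Every `d ∈ D` has binary weight at most `n - 1`: below `2^n` only `2^n - 1` has `n` binary digits
equal to one, and an odd `d` with `2^n < d < 3·2^{n-1} - 1` is `2^n + j` with `j < 2^{n-1} - 1`.
Since `s₂` is subadditive and submultiplicative, `s₂(∑ d·u_d) ≤ (n - 1)·s(U)`, while a positive
multiple of `2^ℓ - 1` has binary weight at least `ℓ`. Equality is attained by `u_{2^{n-1}-1} = 1`
with `ℓ = n - 1`.
-/

theorem Nat.digits_sum_add_le (p : ℕ) [Fact p.Prime] (a b : ℕ) :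
    (p.digits (a + b)).sum ≤ (p.digits a).sum + (p.digits b).sum := by
  -- Legendre: `(p - 1)·v_p(n!) = n - s_p(n)`, and `a! * b! ∣ (a + b)!`.
  have hv : padicValNat p (a.factorial * b.factorial) ≤ padicValNat p (a + b).factorial := by
    rw [← Nat.add_choose_mul_factorial_mul_factorial, mul_assoc,
      padicValNat.mul (Nat.choose_pos (Nat.le_add_left b a)).ne' (by positivity)]
    exact Nat.le_add_left _ _
  have hLegendre := Nat.mul_le_mul_left (p - 1) hv
  rw [padicValNat.mul (Nat.factorial_ne_zero a) (Nat.factorial_ne_zero b), mul_add,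
    sub_one_mul_padicValNat_factorial, sub_one_mul_padicValNat_factorial,
    sub_one_mul_padicValNat_factorial] at hLegendre
  have := Nat.digit_sum_le p a
  have := Nat.digit_sum_le p b
  have := Nat.digit_sum_le p (a + b)
  omega

@[simp]
lemma s2_zero : s2 0 = 0 := rfl

@[simp]
lemma s2_one : s2 1 = 1 := rfl

lemma s2_two_mul_add (m : ℕ) {r : ℕ} (hr : r < 2) : s2 (2 * m + r) = r + s2 m := by
  rcases Nat.eq_zero_or_pos (2 * m + r) with h | h
  · obtain ⟨rfl, rfl⟩ : m = 0 ∧ r = 0 := by omega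
    rfl
  · rw [s2, Nat.digits_def' one_lt_two h, List.sum_cons, s2]
    congr 3 <;> omega

lemma s2_eq_mod_two_add (m : ℕ) : s2 m = m % 2 + s2 (m / 2) := by
  conv_lhs => rw [← Nat.div_add_mod m 2]
  exact s2_two_mul_add _ (Nat.mod_lt m two_pos)

lemma s2_two_mul (m : ℕ) : s2 (2 * m) = s2 m := by
  simpa using s2_two_mul_add m two_pos

lemma s2_add_le (a b : ℕ) : s2 (a + b) ≤ s2 a + s2 b :=
  Nat.digits_sum_add_le 2 a b

lemma s2_sum_le {ι : Type*} (s : Finset ι) (f : ι → ℕ) :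
    s2 (∑ i ∈ s, f i) ≤ ∑ i ∈ s, s2 (f i) :=
  Finset.le_sum_of_subadditive s2 s2_zero.le s2_add_le s f

lemma s2_mul_le (a b : ℕ) : s2 (a * b) ≤ s2 a * s2 b := by
  induction b using Nat.strong_induction_on with
  | _ b ih =>
    rcases Nat.eq_zero_or_pos b with rfl | hb
    · simp
    have hsplit : a * b = 2 * (a * (b / 2)) + a * (b % 2) := by
      conv_lhs => rw [← Nat.div_add_mod b 2]
      ring
    have hlast : s2 (a * (b % 2)) ≤ s2 a * (b % 2) := by
      rcases Nat.mod_two_eq_zero_or_one b with h | h <;> simp [h]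
    calc s2 (a * b) ≤ s2 (a * (b / 2)) + s2 (a * (b % 2)) := by
          rw [hsplit, ← s2_two_mul (a * (b / 2))]
          exact s2_add_le _ _
      _ ≤ s2 a * s2 (b / 2) + s2 a * (b % 2) :=
          Nat.add_le_add (ih (b / 2) (by omega)) hlast
      _ = s2 a * s2 b := by rw [s2_eq_mod_two_add b]; ring

lemma s2_two_pow_mul_add (ℓ a : ℕ) {b : ℕ} (hb : b < 2 ^ ℓ) :
    s2 (2 ^ ℓ * a + b) = s2 a + s2 b := by
  induction ℓ generalizing b with
  | zero =>
    obtain rfl : b = 0 := by simpa using hb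
    simp
  | succ k ih =>
    rw [pow_succ] at hb
    have hdecomp : 2 ^ (k + 1) * a + b = 2 * (2 ^ k * a + b / 2) + b % 2 := by
      rw [pow_succ, mul_comm (2 ^ k) 2, mul_assoc]
      omega
    rw [hdecomp, s2_two_mul_add _ (Nat.mod_lt b two_pos), ih (by omega), s2_eq_mod_two_add b]
    ring

lemma s2_two_pow_sub_one (ℓ : ℕ) : s2 (2 ^ ℓ - 1) = ℓ := by
  induction ℓ with
  | zero => rfl
  | succ k ih =>
    have h : 2 ^ (k + 1) - 1 = 2 * (2 ^ k - 1) + 1 := by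
      have := Nat.one_le_two_pow (n := k)
      rw [pow_succ]
      omega
    rw [h, s2_two_mul_add _ one_lt_two, ih, add_comm]

lemma s2_le_of_lt_two_pow {k m : ℕ} (hm : m < 2 ^ k) : s2 m ≤ k := by
  induction k generalizing m with
  | zero =>
    obtain rfl : m = 0 := by simpa using hm
    rfl
  | succ k ih =>
    rw [pow_succ] at hm
    have := ih (m := m / 2) (by omega)
    rw [s2_eq_mod_two_add]
    omega

lemma s2_lt_of_lt_two_pow {k m : ℕ} (hm : m < 2 ^ k) (hne : m ≠ 2 ^ k - 1) : s2 m < k := by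
  induction k generalizing m with
  | zero => simp_all
  | succ k ih =>
    rw [pow_succ] at hm hne
    rw [s2_eq_mod_two_add]
    rcases Nat.mod_two_eq_zero_or_one m with h | h
    · have := s2_le_of_lt_two_pow (k := k) (m := m / 2) (by omega)
      omega
    · have := ih (m := m / 2) (by omega) (by omega)
      omega

lemma s2_le_of_lt_three_mul_two_pow_sub_one {k m : ℕ} (hm : m < 3 * 2 ^ k - 1)
    (hne : m ≠ 2 ^ (k + 1) - 1) : s2 m ≤ k := by
  rcases Nat.lt_or_ge m (2 ^ (k + 1)) with hlt | hge
  · exact Nat.le_of_lt_succ (s2_lt_of_lt_two_pow hlt hne)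
  rw [pow_succ] at hge hne
  have hj : m - 2 ^ k * 2 < 2 ^ k := by omega
  have := s2_lt_of_lt_two_pow hj (by omega)
  rw [← Nat.add_sub_cancel' hge, s2_two_pow_mul_add k 2 hj, show s2 2 = 1 from rfl]
  omega

lemma le_s2_of_two_pow_sub_one_dvd {ℓ m : ℕ} (hm : 0 < m) (hdvd : 2 ^ ℓ - 1 ∣ m) :
    ℓ ≤ s2 m := by
  rcases Nat.eq_zero_or_pos ℓ with rfl | hℓ
  · exact Nat.zero_le _
  have h2 : 2 ≤ 2 ^ ℓ := Nat.le_self_pow hℓ.ne' 2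
  induction m using Nat.strong_induction_on with
  | _ m ih =>
    rcases Nat.lt_or_ge m (2 ^ ℓ) with hlt | hge
    · have := Nat.le_of_dvd hm hdvd
      rw [show m = 2 ^ ℓ - 1 by omega, s2_two_pow_sub_one]
    -- Folding the top digits onto the bottom ones keeps the residue mod `2^ℓ - 1` and lowers `m`.
    set q := m / 2 ^ ℓ
    set r := m % 2 ^ ℓ
    have hm_eq : m = 2 ^ ℓ * q + r := (Nat.div_add_mod m (2 ^ ℓ)).symm
    have hr : r < 2 ^ ℓ := Nat.mod_lt m (by omega)
    have hq : 1 ≤ q := (Nat.one_le_div_iff (by omega)).mpr hge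
    have h2q : 2 * q ≤ 2 ^ ℓ * q := Nat.mul_le_mul_right q h2
    have hdvd' : 2 ^ ℓ - 1 ∣ q + r := ((modEq_mersenne ℓ m).dvd_iff dvd_rfl).mp hdvd
    calc ℓ ≤ s2 (q + r) := ih (q + r) (by omega) (by omega) hdvd'
      _ ≤ s2 q + s2 r := s2_add_le q r
      _ = s2 m := by rw [hm_eq, s2_two_pow_mul_add ℓ q hr]

lemma mem_oddUpTo {d i : ℕ} : i ∈ oddUpTo d ↔ i ≤ d ∧ i % 2 = 1 := by
  simp [oddUpTo]

theorem IsSolution.le_mul_weight {D : Finset ℕ} {ℓ k : ℕ} {U : ℕ → ℕ} (hU : IsSolution D ℓ U)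
    (hD : ∀ d ∈ D, s2 d ≤ k) : ℓ ≤ k * weight D U :=
  calc ℓ ≤ s2 (∑ d ∈ D, d * U d) := le_s2_of_two_pow_sub_one_dvd hU.pos hU.dvd
    _ ≤ ∑ d ∈ D, s2 (d * U d) := s2_sum_le D _
    _ ≤ ∑ d ∈ D, k * s2 (U d) := Finset.sum_le_sum fun d hd =>
        (s2_mul_le d (U d)).trans (Nat.mul_le_mul_right _ (hD d hd))
    _ = k * weight D U := by rw [weight, Finset.mul_sum]

lemma sum_mul_sol1 {D : Finset ℕ} {a : ℕ} (ha : a ∈ D) : ∑ d ∈ D, d * sol1 a d = a := by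
  simp [sol1, ha]

lemma weight_sol1 {D : Finset ℕ} {a : ℕ} (ha : a ∈ D) : weight D (sol1 a) = 1 := by
  simp [weight, sol1, apply_ite s2, ha]

theorem isSolution_sol1_two_pow_sub_one {D : Finset ℕ} {ℓ : ℕ} (hℓ : 1 ≤ ℓ)
    (hD : 2 ^ ℓ - 1 ∈ D) : IsSolution D ℓ (sol1 (2 ^ ℓ - 1)) where
  len_pos := hℓ
  bounded d := by
    have := Nat.one_lt_two_pow (n := ℓ) (by omega)
    unfold sol1
    split <;> omega
  supp_sub d hd := if_neg (by rintro rfl; exact hd hD)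
  dvd := by rw [sum_mul_sol1 hD]
  pos := by
    have := Nat.one_lt_two_pow (n := ℓ) (by omega)
    rw [sum_mul_sol1 hD]
    omega

/-- For `n` large enough and odd `d` with `2^n − 1 < d < 3·2^{n−1} − 1`, the 2-density
of `D = {i : 1 ≤ i ≤ d, i odd} \ {2^n − 1}` is `1/(n−1)`: every solution of length `ℓ`
satisfies `(n−1)·s(U) ≥ ℓ`, and some solution attains equality. -/
theorem density_case_i :
    ∃ N : ℕ, ∀ n : ℕ, N ≤ n → ∀ d : ℕ, d % 2 = 1 →
      2 ^ n - 1 < d → d < 3 * 2 ^ (n - 1) - 1 →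
      (∀ ℓ U, IsSolution ((oddUpTo d).erase (2 ^ n - 1)) ℓ U →
        ℓ ≤ (n - 1) * weight ((oddUpTo d).erase (2 ^ n - 1)) U) ∧
      (∃ ℓ U, IsSolution ((oddUpTo d).erase (2 ^ n - 1)) ℓ U ∧
        ℓ = (n - 1) * weight ((oddUpTo d).erase (2 ^ n - 1)) U) := by
  refine ⟨2, fun n hn d hd hlo hhi => ?_⟩
  obtain ⟨k, rfl⟩ : ∃ k, n = k + 2 := ⟨n - 2, by omega⟩
  rw [show k + 2 - 1 = k + 1 from rfl] at hhi ⊢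
  have hmem : 2 ^ (k + 1) - 1 ∈ (oddUpTo d).erase (2 ^ (k + 2) - 1) := by
    have := Nat.one_le_two_pow (n := k)
    rw [Finset.mem_erase, mem_oddUpTo, pow_succ, pow_succ, pow_succ]
    rw [pow_succ, pow_succ] at hlo
    omega
  refine ⟨fun ℓ U hU => hU.le_mul_weight fun i hi => ?_,
    k + 1, sol1 (2 ^ (k + 1) - 1), isSolution_sol1_two_pow_sub_one (by omega) hmem,
    by rw [weight_sol1 hmem, mul_one]⟩
  rw [Finset.mem_erase, mem_oddUpTo] at hi
  exact s2_le_of_lt_three_mul_two_pow_sub_one (by omega) hi.1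
end

section
/- There exists N such that for all n ≥ N and every odd integer d with 3·2^{n−1} − 1 ≤ d < 2^{n+1} − 7, the 2-density of the set D := {i : 1 ≤ i ≤ d, i odd} \ {2^n − 1} equals 2/(2n−1); that is, every solution U of any length ℓ for D satisfies (2n−1)·s(U) ≥ 2ℓ, and some solution attains (2n−1)·s(U) = 2ℓ. -/
/-!
Shifting a solution `U` of length `ℓ` rotates every `u_d` as an `ℓ`-bit word. The support map
`φ_k` then satisfies `2 φ_k = φ_{k+1} + ∑_{d ∈ C_k} d`, where `C_k` is the set of coordinates whose
top bit is rotated out at step `k`. Over one period the bits rotated out of `u_d` spell out `u_d`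
itself, so the sizes `#C_k` add up to the weight `s(U)`. Hence a potential `η` with
`2 + η φ_{k+1} ≤ (2n - 1) #C_k + η φ_k` at every step telescopes to `2 ℓ ≤ (2n - 1) s(U)`.

Writing `M = d` and `m = n - 1`, take `η x = 2 ⌊log₂ (B / x)⌋ + e x` with `B = (M + 1) 4^(m+1)`
and a correction `e x ∈ {0, 1, 2}`. A step without carry doubles `φ` and lowers `η` by `2`; a step
with one carry `d' ≤ M` raises the logarithm by at most about `m`, and the correction absorbs
the two transitions that would otherwise overshoot; two or more carries give a much larger budget.
Equality is attained by `u = 2^m` at `2^(m+1) - 3` and `u = 1` at `3·2^m - 1`, with `ℓ = 2m + 1`.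
-/

open Finset

lemma s2_two_mul_add_s12 {b : ℕ} (hb : b < 2) (x : ℕ) : s2 (2 * x + b) = s2 x + b := by
  rcases Nat.eq_zero_or_pos x with rfl | hx
  · interval_cases b <;> simp [s2]
  · rw [s2, add_comm, Nat.digits_add 2 (by norm_num) b x hb (Or.inr hx.ne'), List.sum_cons, s2,
      add_comm]

lemma s2_two_pow (k : ℕ) : s2 (2 ^ k) = 1 := by
  induction k with
  | zero => rfl
  | succ k ih => simpa [pow_succ', ih] using s2_two_mul_add_s12 (b := 0) (by norm_num) (2 ^ k)

/-- `shift2 ℓ` rotates `v ≤ 2^ℓ - 1` as an `ℓ`-bit word; this is the bit it rotates out. -/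
def topBit (ℓ v : ℕ) : ℕ := if 2 ^ ℓ - 1 ≤ 2 * v then 1 else 0

section Shift

variable {ℓ v : ℕ}

lemma topBit_lt_two (ℓ v : ℕ) : topBit ℓ v < 2 := by
  unfold topBit; split <;> omega

lemma shift2_add_topBit (hv : v ≤ 2 ^ ℓ - 1) :
    shift2 ℓ v + (2 ^ ℓ - 1) * topBit ℓ v = 2 * v := by
  unfold shift2 topBit
  split_ifs with hE hcarry hcarry <;> try omega
  · rw [Nat.mod_eq_sub_mod hcarry, Nat.mod_eq_of_lt (by omega)]; omega
  · rw [Nat.mod_eq_of_lt (by omega)]; omega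

lemma shift2_lt (hv : v < 2 ^ ℓ - 1) : shift2 ℓ v < 2 ^ ℓ - 1 := by
  rw [shift2, if_neg hv.ne]
  exact Nat.mod_lt _ (by omega)

lemma mapsTo_shift2_Iic : Set.MapsTo (shift2 ℓ) (Set.Iic (2 ^ ℓ - 1)) (Set.Iic (2 ^ ℓ - 1)) :=
  fun v (hv : v ≤ _) ↦ (Nat.lt_or_eq_of_le hv).elim (fun h ↦ (shift2_lt h).le)
    fun h ↦ by simp [Set.mem_Iic, shift2, h]

lemma mapsTo_shift2_Iio : Set.MapsTo (shift2 ℓ) (Set.Iio (2 ^ ℓ - 1)) (Set.Iio (2 ^ ℓ - 1)) :=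
  fun _ hv ↦ shift2_lt hv

lemma iterate_shift2_le (hv : v ≤ 2 ^ ℓ - 1) (k : ℕ) : (shift2 ℓ)^[k] v ≤ 2 ^ ℓ - 1 :=
  mapsTo_shift2_Iic.iterate k hv

lemma shift2_pos (hv : v ≤ 2 ^ ℓ - 1) (h : 0 < v) : 0 < shift2 ℓ v := by
  have key := shift2_add_topBit hv
  have hodd : (2 ^ ℓ - 1) % 2 = 1 := by
    obtain ⟨k, rfl⟩ : ∃ k, ℓ = k + 1 := ⟨ℓ - 1, by cases ℓ <;> simp_all⟩
    rw [pow_succ]; omega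
  unfold topBit at key
  split_ifs at key <;> omega

lemma iterate_shift2_pos (hv : v ≤ 2 ^ ℓ - 1) (h : 0 < v) (k : ℕ) : 0 < (shift2 ℓ)^[k] v := by
  induction k with
  | zero => exact h
  | succ k ih =>
    rw [Function.iterate_succ_apply']
    exact shift2_pos (iterate_shift2_le hv k) ih

def orbitBits (ℓ v : ℕ) : ℕ → ℕ
  | 0 => 0
  | n + 1 => 2 * orbitBits ℓ v n + topBit ℓ ((shift2 ℓ)^[n] v)

lemma s2_orbitBits (n : ℕ) :
    s2 (orbitBits ℓ v n) = ∑ k ∈ range n, topBit ℓ ((shift2 ℓ)^[k] v) := by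
  induction n with
  | zero => rfl
  | succ n ih => rw [orbitBits, s2_two_mul_add_s12 (topBit_lt_two _ _), ih, sum_range_succ]

lemma iterate_shift2_add_orbitBits (hv : v ≤ 2 ^ ℓ - 1) (n : ℕ) :
    (shift2 ℓ)^[n] v + (2 ^ ℓ - 1) * orbitBits ℓ v n = 2 ^ n * v := by
  induction n with
  | zero => simp [orbitBits]
  | succ n ih =>
    have := shift2_add_topBit (iterate_shift2_le hv n)
    rw [Function.iterate_succ_apply', orbitBits, pow_succ']
    linear_combination (norm := ring_nf) this + 2 * ih

lemma iterate_shift2_period (hv : v ≤ 2 ^ ℓ - 1) : (shift2 ℓ)^[ℓ] v = v := by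
  rcases Nat.lt_or_eq_of_le hv with hlt | rfl
  · have key := iterate_shift2_add_orbitBits hv ℓ
    have hmod : (shift2 ℓ)^[ℓ] v ≡ v [MOD 2 ^ ℓ - 1] := by
      have h2 : 2 ^ ℓ * v = v + (2 ^ ℓ - 1) * v := by
        have : 1 ≤ 2 ^ ℓ := Nat.one_le_two_pow
        zify [this]; ring
      rw [h2] at key
      have := congrArg (· % (2 ^ ℓ - 1)) key
      rwa [Nat.add_mul_mod_self_left, Nat.add_mul_mod_self_left] at this
    exact Nat.ModEq.eq_of_lt_of_lt hmod (mapsTo_shift2_Iio.iterate ℓ hlt) hlt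
  · exact Function.iterate_fixed (by simp [shift2]) ℓ

lemma orbitBits_period (hv : v ≤ 2 ^ ℓ - 1) : orbitBits ℓ v ℓ = v := by
  have key := iterate_shift2_add_orbitBits hv ℓ
  rw [iterate_shift2_period hv] at key
  rcases ℓ.eq_zero_or_pos with rfl | hℓ
  · simp_all [orbitBits]
  · have : 2 ≤ 2 ^ ℓ := Nat.le_self_pow hℓ.ne' 2
    have h2 : 2 ^ ℓ * v = v + (2 ^ ℓ - 1) * v := by zify [(by omega : 1 ≤ 2 ^ ℓ)]; ring
    exact Nat.eq_of_mul_eq_mul_left (by omega : 0 < 2 ^ ℓ - 1) (by omega)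

lemma sum_topBit_iterate_shift2 (hv : v ≤ 2 ^ ℓ - 1) :
    ∑ k ∈ range ℓ, topBit ℓ ((shift2 ℓ)^[k] v) = s2 v := by
  rw [← s2_orbitBits, orbitBits_period hv]

end Shift

section Solution

variable {D : Finset ℕ} {ℓ : ℕ} {U : ℕ → ℕ}

def orbitSum (D : Finset ℕ) (ℓ : ℕ) (U : ℕ → ℕ) (k : ℕ) : ℕ :=
  ∑ d ∈ D, d * (shift2 ℓ)^[k] (U d)

lemma supportMap_eq_orbitSum_div (k : ℕ) :
    supportMap D ℓ U k = orbitSum D ℓ U k / (2 ^ ℓ - 1) := rfl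

/-- The coordinates whose top bit the `k`-th shift rotates out. -/
def carrySet (D : Finset ℕ) (ℓ : ℕ) (U : ℕ → ℕ) (k : ℕ) : Finset ℕ :=
  D.filter fun d ↦ 2 ^ ℓ - 1 ≤ 2 * (shift2 ℓ)^[k] (U d)

lemma orbitSum_succ_add (hU : ∀ d, U d ≤ 2 ^ ℓ - 1) (k : ℕ) :
    orbitSum D ℓ U (k + 1) + (2 ^ ℓ - 1) * ∑ d ∈ carrySet D ℓ U k, d = 2 * orbitSum D ℓ U k := by
  have hcarry : ∑ d ∈ carrySet D ℓ U k, d = ∑ d ∈ D, d * topBit ℓ ((shift2 ℓ)^[k] (U d)) := by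
    simp only [carrySet, sum_filter, topBit, mul_ite, mul_one, mul_zero]
  rw [hcarry, orbitSum, orbitSum, mul_sum, mul_sum, ← sum_add_distrib]
  refine sum_congr rfl fun d _ ↦ ?_
  have := shift2_add_topBit (iterate_shift2_le (hU d) k)
  rw [Function.iterate_succ_apply']
  linear_combination d * this

lemma IsSolution.dvd_orbitSum (hsol : IsSolution D ℓ U) (k : ℕ) :
    2 ^ ℓ - 1 ∣ orbitSum D ℓ U k := by
  induction k with
  | zero => simpa [orbitSum] using hsol.dvd
  | succ k ih =>
    have key := orbitSum_succ_add (D := D) hsol.bounded k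
    exact (Nat.dvd_add_left (dvd_mul_right _ _)).mp (key ▸ ih.mul_left 2)

lemma IsSolution.two_mul_supportMap (hsol : IsSolution D ℓ U) (k : ℕ) :
    2 * supportMap D ℓ U k = supportMap D ℓ U (k + 1) + ∑ d ∈ carrySet D ℓ U k, d := by
  have hE : 0 < 2 ^ ℓ - 1 :=
    Nat.sub_pos_of_lt (Nat.one_lt_two_pow (Nat.one_le_iff_ne_zero.mp hsol.len_pos))
  obtain ⟨a, ha⟩ := hsol.dvd_orbitSum k
  obtain ⟨b, hb⟩ := hsol.dvd_orbitSum (k + 1)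
  have key := orbitSum_succ_add (D := D) hsol.bounded k
  rw [supportMap_eq_orbitSum_div, supportMap_eq_orbitSum_div, ha, hb,
    Nat.mul_div_cancel_left _ hE, Nat.mul_div_cancel_left _ hE]
  rw [ha, hb] at key
  exact Nat.eq_of_mul_eq_mul_left hE (by linarith)

lemma IsSolution.supportMap_pos (hsol : IsSolution D ℓ U) (k : ℕ) : 0 < supportMap D ℓ U k := by
  obtain ⟨d, hd, hdU⟩ := exists_ne_zero_of_sum_ne_zero hsol.pos.ne'
  obtain ⟨hd0, hU0⟩ := Nat.mul_ne_zero_iff.1 hdU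
  have hterm : 0 < d * (shift2 ℓ)^[k] (U d) :=
    Nat.mul_pos (Nat.pos_of_ne_zero hd0)
      (iterate_shift2_pos (hsol.bounded d) (Nat.pos_of_ne_zero hU0) k)
  have hpos : 0 < orbitSum D ℓ U k :=
    hterm.trans_le (single_le_sum (f := fun d ↦ d * (shift2 ℓ)^[k] (U d))
      (fun _ _ ↦ Nat.zero_le _) hd)
  have hdvd := hsol.dvd_orbitSum k
  exact Nat.div_pos (Nat.le_of_dvd hpos hdvd) (Nat.pos_of_dvd_of_pos hdvd hpos)

lemma IsSolution.supportMap_le_sum (hsol : IsSolution D ℓ U) (k : ℕ) :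
    supportMap D ℓ U k ≤ ∑ d ∈ D, d := by
  refine Nat.div_le_of_le_mul ?_
  rw [mul_comm, sum_mul]
  exact sum_le_sum fun d _ ↦ Nat.mul_le_mul_left d (iterate_shift2_le (hsol.bounded d) k)

lemma IsSolution.supportMap_period (hsol : IsSolution D ℓ U) :
    supportMap D ℓ U ℓ = supportMap D ℓ U 0 := by
  simp only [supportMap, iterate_shift2_period (hsol.bounded _), Function.iterate_zero, id]

lemma IsSolution.sum_card_carrySet (hsol : IsSolution D ℓ U) :
    ∑ k ∈ range ℓ, #(carrySet D ℓ U k) = weight D U := by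
  simp only [carrySet, card_filter]
  rw [sum_comm, weight]
  refine sum_congr rfl fun d _ ↦ ?_
  exact sum_topBit_iterate_shift2 (hsol.bounded d)

theorem IsSolution.mul_le_mul_weight_of_potential (hsol : IsSolution D ℓ U) {a A : ℕ}
    (η : ℕ → ℕ) (hη : ∀ S ⊆ D, ∀ x y, 0 < x → 0 < y → x ≤ ∑ d ∈ D, d → y ≤ ∑ d ∈ D, d →
      2 * x = y + ∑ d ∈ S, d → a + η y ≤ A * #S + η x) :
    a * ℓ ≤ A * weight D U := by
  set φ := supportMap D ℓ U
  have hstep (k : ℕ) : a + η (φ (k + 1)) ≤ A * #(carrySet D ℓ U k) + η (φ k) :=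
    hη _ (filter_subset _ _) _ _ (hsol.supportMap_pos k) (hsol.supportMap_pos _)
      (hsol.supportMap_le_sum k) (hsol.supportMap_le_sum _) (hsol.two_mul_supportMap k)
  have hsum := sum_le_sum fun k (_ : k ∈ range ℓ) ↦ hstep k
  have htelescope : ∑ k ∈ range ℓ, η (φ (k + 1)) = ∑ k ∈ range ℓ, η (φ k) := by
    have h1 := sum_range_succ (fun k ↦ η (φ k)) ℓ
    have h2 := sum_range_succ' (fun k ↦ η (φ k)) ℓ
    rw [show φ ℓ = φ 0 from hsol.supportMap_period] at h1
    omega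
  rw [sum_add_distrib, sum_add_distrib, htelescope, ← mul_sum, hsol.sum_card_carrySet] at hsum
  simpa [mul_comm] using hsum

end Solution

section TwoDigitSolution

variable {D : Finset ℕ} {a b x y : ℕ}

lemma sum_mul_sol2 (ha : a ∈ D) (hb : b ∈ D) (hab : a ≠ b) :
    ∑ d ∈ D, d * sol2 a x b y d = a * x + b * y := by
  rw [sum_eq_add_of_mem a b ha hb hab fun c _ hc ↦ by simp [sol2, hc.1, hc.2]]
  simp [sol2, hab.symm]

lemma weight_sol2 (ha : a ∈ D) (hb : b ∈ D) (hab : a ≠ b) :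
    weight D (sol2 a x b y) = s2 x + s2 y := by
  rw [weight, sum_eq_add_of_mem a b ha hb hab fun c _ hc ↦ by simp [sol2, hc.1, hc.2, s2]]
  simp [sol2, hab.symm]

lemma isSolution_sol2 {ℓ : ℕ} (hℓ : 1 ≤ ℓ) (ha : a ∈ D) (hb : b ∈ D) (hab : a ≠ b)
    (hx : x ≤ 2 ^ ℓ - 1) (hy : y ≤ 2 ^ ℓ - 1) (hdvd : 2 ^ ℓ - 1 ∣ a * x + b * y)
    (hpos : 0 < a * x + b * y) : IsSolution D ℓ (sol2 a x b y) where
  len_pos := hℓ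
  bounded d := by unfold sol2; split_ifs <;> omega
  supp_sub d hd := by
    have : d ≠ a := fun h ↦ hd (h ▸ ha)
    have : d ≠ b := fun h ↦ hd (h ▸ hb)
    simp [sol2, *]
  dvd := by rwa [sum_mul_sol2 ha hb hab]
  pos := by rwa [sum_mul_sol2 ha hb hab]

end TwoDigitSolution

lemma mem_erase_oddUpTo {M n x : ℕ} : x ∈ (oddUpTo M).erase n ↔ x ≠ n ∧ x % 2 = 1 ∧ x ≤ M := by
  simp only [oddUpTo, mem_erase, mem_filter, mem_range, Nat.lt_succ_iff]
  tauto

namespace CaseII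

variable {M m x y : ℕ}

def scale (M m : ℕ) : ℕ := (M + 1) * 2 ^ (2 * m + 2)

def level (M m x : ℕ) : ℕ := Nat.log 2 (scale M m / x)

def IsCritical (M m x : ℕ) : Prop := ∃ j, x * 2 ^ j = (M + 3) * 2 ^ (2 * m + 2)

/- The correction is invariant under doubling, so a carry-free step lowers the potential by
exactly `2`. Its value `0` on the doubling orbit of `1` keeps the steps into `1` affordable, except
the one from `2 ^ m`, which would need the excluded carry `2 ^ (m + 1) - 1`; its value `2` on the
doubling orbit of `(M + 3) / 2` pays for the step `(M + 3) / 2 ↦ 3` through the carry `M`. -/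
open Classical in
noncomputable def correction (M m x : ℕ) : ℕ :=
  if x.isPowerOfTwo then 0 else if IsCritical M m x then 2 else 1

noncomputable def potential (M m x : ℕ) : ℕ := 2 * level M m x + correction M m x

lemma le_scale (h : x ≤ M + 1) : x ≤ scale M m :=
  h.trans (Nat.le_mul_of_pos_right _ (by positivity))

lemma le_level_iff (hx : 0 < x) (hxB : x ≤ scale M m) {p : ℕ} :
    p ≤ level M m x ↔ x * 2 ^ p ≤ scale M m := by
  rw [level, Nat.le_log_iff_pow_le (by norm_num) (Nat.div_pos hxB hx).ne', mul_comm,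
    Nat.le_div_iff_mul_le hx]

lemma le_level (hx : 0 < x) {q : ℕ} (h : x * 2 ^ q ≤ M + 1) : 2 * m + 2 + q ≤ level M m x := by
  have hle : x * 2 ^ (2 * m + 2 + q) ≤ scale M m := by
    rw [scale, add_comm _ q, pow_add, ← mul_assoc]
    exact Nat.mul_le_mul_right _ h
  exact (le_level_iff hx (le_trans (Nat.le_mul_of_pos_right x (by positivity)) hle)).2 hle

lemma level_lt (hx : 0 < x) (hxB : x ≤ scale M m) {q : ℕ} (h : M + 1 < x * 2 ^ q) :
    level M m x < 2 * m + 2 + q := by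
  by_contra! hle
  have := (le_level_iff hx hxB).1 hle
  rw [scale, add_comm _ q, pow_add, ← mul_assoc] at this
  exact absurd (Nat.le_of_mul_le_mul_right this (by positivity)) (not_le.2 h)

lemma level_le_of_le_mul (hx : 0 < x) (hyB : y ≤ scale M m) {j : ℕ} (h : x ≤ y * 2 ^ j) :
    level M m y ≤ level M m x + j := by
  have hy : 0 < y := Nat.pos_of_ne_zero fun hy ↦ by simp [hy] at h; omega
  by_contra! hlt
  have key : x * 2 ^ (level M m y - j) ≤ scale M m :=
    calc x * 2 ^ (level M m y - j) ≤ y * 2 ^ j * 2 ^ (level M m y - j) := Nat.mul_le_mul_right _ h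
      _ = y * 2 ^ level M m y := by rw [mul_assoc, ← pow_add]; congr 2; omega
      _ ≤ scale M m := (le_level_iff hy hyB).1 le_rfl
  have := (le_level_iff hx (le_trans (Nat.le_mul_of_pos_right x (by positivity)) key)).2 key
  omega

lemma level_two_mul (hx : 0 < x) (h : 2 * x ≤ scale M m) :
    level M m (2 * x) + 1 = level M m x := by
  have hle : level M m x ≤ level M m (2 * x) + 1 :=
    level_le_of_le_mul (by omega) (by omega) (by rw [pow_one, mul_comm])
  have hge : level M m (2 * x) + 1 ≤ level M m x := by
    refine (le_level_iff hx (by omega)).2 ?_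
    rw [pow_succ, mul_comm (2 ^ _), ← mul_assoc, mul_comm x]
    exact (le_level_iff (by omega) h).1 le_rfl
  omega

lemma isPowerOfTwo_two_mul_iff (hx : 0 < x) : (2 * x).isPowerOfTwo ↔ x.isPowerOfTwo := by
  constructor
  · rintro ⟨_ | j, hj⟩
    · omega
    · exact ⟨j, by rw [pow_succ] at hj; omega⟩
  · rintro ⟨j, rfl⟩
    exact ⟨j + 1, by rw [pow_succ, mul_comm]⟩

lemma isCritical_two_mul_iff (h : 2 * x ≤ scale M m) :
    IsCritical M m (2 * x) ↔ IsCritical M m x := by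
  constructor
  · rintro ⟨j, hj⟩
    exact ⟨j + 1, by rw [← hj, pow_succ]; ring⟩
  · rintro ⟨_ | j, hj⟩
    · have : scale M m < (M + 3) * 2 ^ (2 * m + 2) :=
        Nat.mul_lt_mul_of_pos_right (by omega) (by positivity)
      rw [pow_zero, mul_one] at hj
      omega
    · exact ⟨j, by rw [← hj, pow_succ]; ring⟩

lemma correction_le_two (M m x : ℕ) : correction M m x ≤ 2 := by
  unfold correction; split_ifs <;> omega

lemma correction_le_one (h : ¬ IsCritical M m x) : correction M m x ≤ 1 := by
  unfold correction; split_ifs <;> omega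

lemma one_le_correction (h : ¬ x.isPowerOfTwo) : 1 ≤ correction M m x := by
  unfold correction; split_ifs <;> omega

lemma potential_two_mul (hx : 0 < x) (h : 2 * x ≤ scale M m) :
    potential M m (2 * x) + 2 = potential M m x := by
  have hlevel := level_two_mul hx h
  have hcorr : correction M m (2 * x) = correction M m x := by
    have := isCritical_two_mul_iff h
    simp only [correction, isPowerOfTwo_two_mul_iff hx]
    split_ifs <;> tauto
  rw [potential, potential, hcorr]
  omega

lemma not_isPowerOfTwo_of_lt_of_lt {a : ℕ} (h₁ : 2 ^ a < x) (h₂ : x < 2 ^ (a + 1)) :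
    ¬ x.isPowerOfTwo := by
  rintro ⟨j, rfl⟩
  rw [Nat.pow_lt_pow_iff_right (by norm_num)] at h₁ h₂
  omega

lemma not_isCritical_three (hM1 : 3 * 2 ^ m ≤ M + 1) (hM2 : M + 9 ≤ 4 * 2 ^ m) :
    ¬ IsCritical M m 3 := by
  rintro ⟨j, hj⟩
  rcases lt_or_ge j (2 * m + 2) with hj' | hj'
  · have : 2 ^ j < 2 ^ (2 * m + 2) := Nat.pow_lt_pow_right (by norm_num) hj'
    have : 3 * 2 ^ (2 * m + 2) ≤ (M + 3) * 2 ^ (2 * m + 2) := Nat.mul_le_mul_right _ (by omega)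
    omega
  · obtain ⟨i, rfl⟩ := Nat.exists_eq_add_of_le hj'
    have hi : 3 * 2 ^ i = M + 3 :=
      Nat.eq_of_mul_eq_mul_right (by positivity : 0 < 2 ^ (2 * m + 2)) (by rw [← hj]; ring)
    have hmi : m < i := (Nat.pow_lt_pow_iff_right (a := 2) (by norm_num)).1 (by omega)
    have : 2 ^ (m + 1) ≤ 2 ^ i := Nat.pow_le_pow_right (by norm_num) hmi
    rw [pow_succ] at this
    omega

lemma potential_one_le (hM2 : M + 9 ≤ 4 * 2 ^ m) : potential M m 1 ≤ 6 * m + 6 := by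
  have hlevel := level_lt (M := M) (m := m) one_pos (le_scale (by omega)) (q := m + 2)
    (by rw [pow_add]; omega)
  have hcorr : correction M m 1 = 0 := if_pos ⟨0, rfl⟩
  unfold potential
  omega

lemma potential_three_le (hM1 : 3 * 2 ^ m ≤ M + 1) (hM2 : M + 9 ≤ 4 * 2 ^ m) :
    potential M m 3 ≤ 6 * m + 5 := by
  have hlevel := level_lt (M := M) (m := m) (x := 3) (by norm_num) (le_scale (by omega))
    (q := m + 1) (by rw [pow_succ]; omega)
  have hcorr := correction_le_one (not_isCritical_three hM1 hM2)
  unfold potential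
  omega

lemma level_le_of_isCritical (hM2 : M + 9 ≤ 4 * 2 ^ m) (h5 : 5 ≤ y) (hyB : y ≤ scale M m)
    (hy : IsCritical M m y) : level M m y ≤ 3 * m := by
  obtain ⟨j, hj⟩ := hy
  by_contra! hlt
  have h1 := (le_level_iff (by omega) hyB).1 (show 3 * m + 1 ≤ level M m y by omega)
  have h2 : scale M m < y * 2 ^ j := by
    rw [hj, scale]; exact Nat.mul_lt_mul_of_pos_right (by omega) (by positivity)
  have hj' : 3 * m + 2 ≤ j := by
    by_contra! hj'
    have : 2 ^ j ≤ 2 ^ (3 * m + 1) := Nat.pow_le_pow_right (by norm_num) (by omega)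
    have : y * 2 ^ j ≤ y * 2 ^ (3 * m + 1) := Nat.mul_le_mul_left _ this
    omega
  have h3 : 5 * 2 ^ m * 2 ^ (2 * m + 2) ≤ (M + 3) * 2 ^ (2 * m + 2) :=
    calc 5 * 2 ^ m * 2 ^ (2 * m + 2) = 5 * 2 ^ (3 * m + 2) := by rw [mul_assoc, ← pow_add]; ring_nf
      _ ≤ y * 2 ^ j := Nat.mul_le_mul h5 (Nat.pow_le_pow_right (by norm_num) hj')
      _ = _ := hj
  have := Nat.le_of_mul_le_mul_right h3 (by positivity)
  omega

lemma potential_le_of_five_le (hM2 : M + 9 ≤ 4 * 2 ^ m) (h5 : 5 ≤ y) (hyB : y ≤ scale M m) :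
    potential M m y ≤ 6 * m + 3 := by
  have hlevel := level_lt (by omega) hyB (q := m)
    (by have := Nat.mul_le_mul_right (2 ^ m) h5; omega)
  unfold potential
  by_cases hy : IsCritical M m y
  · have := level_le_of_isCritical hM2 h5 hyB hy
    have := correction_le_two M m y
    omega
  · have := correction_le_one hy
    omega

lemma le_potential (hx : 0 < x) {q : ℕ} (h : x * 2 ^ q ≤ M + 1) :
    4 * m + 4 + 2 * q ≤ potential M m x := by
  have := le_level (m := m) hx h
  unfold potential
  omega

lemma le_potential_of_two_mul_eq (hM1 : 3 * 2 ^ m ≤ M + 1) (hM2 : M + 9 ≤ 4 * 2 ^ m)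
    (hx : 2 * x = M + 3) : 4 * m + 6 ≤ potential M m x := by
  have hlevel := le_level (M := M) (m := m) (x := x) (by omega) (q := 0) (by omega)
  have hpow : ¬ x.isPowerOfTwo :=
    not_isPowerOfTwo_of_lt_of_lt (a := m) (by omega) (by rw [pow_succ]; omega)
  have hcorr : correction M m x = 2 := by
    rw [correction, if_neg hpow, if_pos ⟨2 * m + 3, by rw [← hx, pow_succ]; ring⟩]
  unfold potential
  omega

lemma eq_two_pow_of_isPowerOfTwo (hM1 : 3 * 2 ^ m ≤ M + 1) (hM2 : M + 9 ≤ 4 * 2 ^ m)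
    (hx : x.isPowerOfTwo) (h₁ : M + 1 < 4 * x) (h₂ : 2 * x ≤ M + 1) : x = 2 ^ m := by
  obtain ⟨j, rfl⟩ := hx
  have hlo : 2 ^ (m + 1) < 2 ^ (j + 2) := by rw [pow_succ, pow_succ, pow_succ]; omega
  have hhi : 2 ^ (j + 1) < 2 ^ (m + 2) := by rw [pow_succ, pow_succ, pow_succ]; omega
  rw [Nat.pow_lt_pow_iff_right (by norm_num)] at hlo hhi
  rw [show j = m by omega]

lemma potential_step_single (hm : 2 ≤ m) (hM1 : 3 * 2 ^ m ≤ M + 1) (hM2 : M + 9 ≤ 4 * 2 ^ m)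
    (hModd : M % 2 = 1) {d : ℕ} (hd : d % 2 = 1) (hdM : d ≤ M) (hd_ne : d ≠ 2 ^ (m + 1) - 1)
    (hx : 0 < x) (hyB : y ≤ scale M m) (hxy : 2 * x = y + d) :
    2 + potential M m y ≤ 2 * m + 1 + potential M m x := by
  rcases (by omega : y = 1 ∨ y = 3 ∨ 5 ≤ y) with rfl | rfl | h5
  · have := potential_one_le hM2
    by_cases h4 : x * 2 ^ 2 ≤ M + 1
    · have := le_potential (m := m) hx h4
      omega
    · have hlevel := le_level (M := M) (m := m) hx (q := 1) (by omega)
      have hpow : ¬ x.isPowerOfTwo := fun hx2 ↦ by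
        rw [eq_two_pow_of_isPowerOfTwo hM1 hM2 hx2 (by omega) (by omega)] at hxy
        rw [pow_succ] at hd_ne
        omega
      have := one_le_correction (M := M) (m := m) hpow
      unfold potential at *
      omega
  · have := potential_three_le hM1 hM2
    by_cases h2 : x * 2 ^ 1 ≤ M + 1
    · have := le_potential (m := m) hx h2
      omega
    · have := le_potential_of_two_mul_eq hM1 hM2 (x := x) (by omega)
      omega
  · by_cases hxM : x * 2 ^ 0 ≤ M + 1
    · have := le_potential (m := m) hx hxM
      have := potential_le_of_five_le hM2 h5 hyB
      omega
    · have hlevel := level_le_of_le_mul hx hyB (j := 0) (by omega)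
      have := correction_le_two M m y
      unfold potential
      omega

lemma potential_step_many (hm : 4 ≤ m) (hM2 : M + 9 ≤ 4 * 2 ^ m) {w c : ℕ} (hw : 2 ≤ w)
    (hc : c ≤ w * M) (hx : 0 < x) (hy : 0 < y) (hyB : y ≤ scale M m) (hxy : 2 * x = y + c) :
    2 + potential M m y ≤ (2 * m + 1) * w + potential M m x := by
  have hle : x ≤ y * 2 ^ (w + m + 1) := by
    have hw2 : w + 1 ≤ 2 ^ w := Nat.lt_two_pow_self
    have : 2 * x ≤ y * ((w + 1) * (M + 1)) := by nlinarith
    have : y * ((w + 1) * (M + 1)) ≤ y * (2 ^ w * (4 * 2 ^ m)) :=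
      Nat.mul_le_mul_left _ (Nat.mul_le_mul hw2 (by omega))
    have : 2 ^ (w + m + 1) * 2 = 2 ^ w * (4 * 2 ^ m) := by ring
    nlinarith
  have hlevel := level_le_of_le_mul hx hyB hle
  have := correction_le_two M m y
  unfold potential
  nlinarith

lemma sum_erase_oddUpTo_le_scale (hM2 : M + 9 ≤ 4 * 2 ^ m) (n : ℕ) :
    ∑ d ∈ (oddUpTo M).erase n, d ≤ scale M m := by
  have hcard : #((oddUpTo M).erase n) ≤ M + 1 := by
    simpa using card_le_card fun x hx ↦ mem_range.2 (Nat.lt_succ_of_le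
      (mem_erase_oddUpTo.1 hx).2.2)
  have hM : M ≤ 2 ^ (2 * m + 2) := by
    have : 2 ^ (m + 2) ≤ 2 ^ (2 * m + 2) := Nat.pow_le_pow_right (by norm_num) (by omega)
    rw [pow_add] at this
    omega
  calc ∑ d ∈ (oddUpTo M).erase n, d ≤ #((oddUpTo M).erase n) • M :=
        sum_le_card_nsmul _ _ _ fun d hd ↦ (mem_erase_oddUpTo.1 hd).2.2
    _ ≤ scale M m := by rw [smul_eq_mul, scale]; exact Nat.mul_le_mul hcard hM

lemma potential_step (hm : 4 ≤ m) (hM1 : 3 * 2 ^ m ≤ M + 1) (hM2 : M + 9 ≤ 4 * 2 ^ m)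
    (hModd : M % 2 = 1) {S : Finset ℕ} (hS : S ⊆ (oddUpTo M).erase (2 ^ (m + 1) - 1))
    (hx : 0 < x) (hy : 0 < y) (hyB : y ≤ scale M m) (hxy : 2 * x = y + ∑ d ∈ S, d) :
    2 + potential M m y ≤ (2 * m + 1) * #S + potential M m x := by
  rcases Nat.lt_or_ge #S 2 with hS2 | hS2
  · rcases (by omega : #S = 0 ∨ #S = 1) with hS0 | hS1
    · rw [card_eq_zero.1 hS0, sum_empty, add_zero] at hxy
      have := potential_two_mul (M := M) (m := m) hx (hxy ▸ hyB)
      rw [hS0, ← hxy]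
      omega
    · obtain ⟨d, rfl⟩ := card_eq_one.1 hS1
      obtain ⟨hd_ne, hd, hdM⟩ := mem_erase_oddUpTo.1 (hS (mem_singleton_self d))
      rw [sum_singleton] at hxy
      rw [hS1, mul_one]
      exact potential_step_single (by omega) hM1 hM2 hModd hd hdM hd_ne hx hyB hxy
  · refine potential_step_many hm hM2 hS2 ?_ hx hy hyB hxy
    simpa using sum_le_card_nsmul _ _ _ fun d hd ↦ (mem_erase_oddUpTo.1 (hS hd)).2.2

theorem two_mul_le_mul_weight (hm : 4 ≤ m) (hM1 : 3 * 2 ^ m ≤ M + 1) (hM2 : M + 9 ≤ 4 * 2 ^ m)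
    (hModd : M % 2 = 1) {ℓ : ℕ} {U : ℕ → ℕ}
    (hsol : IsSolution ((oddUpTo M).erase (2 ^ (m + 1) - 1)) ℓ U) :
    2 * ℓ ≤ (2 * m + 1) * weight ((oddUpTo M).erase (2 ^ (m + 1) - 1)) U := by
  have hD := sum_erase_oddUpTo_le_scale hM2 (2 ^ (m + 1) - 1)
  exact hsol.mul_le_mul_weight_of_potential (potential M m)
    fun _ hS _ _ hx hy _ hyD hxy ↦ potential_step hm hM1 hM2 hModd hS hx hy (hyD.trans hD) hxy

theorem exists_two_mul_eq_mul_weight (hM1 : 3 * 2 ^ m ≤ M + 1) (hM2 : M + 9 ≤ 4 * 2 ^ m) :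
    ∃ ℓ U, IsSolution ((oddUpTo M).erase (2 ^ (m + 1) - 1)) ℓ U ∧
      2 * ℓ = (2 * m + 1) * weight ((oddUpTo M).erase (2 ^ (m + 1) - 1)) U := by
  have h2m : 2 ^ (m + 1) = 2 * 2 ^ m := by ring
  have hsq : 2 ^ (2 * m + 1) = 2 * (2 ^ m * 2 ^ m) := by ring
  have heven : 2 ^ m % 2 = 0 := by
    obtain ⟨k, rfl⟩ : ∃ k, m = k + 1 := ⟨m - 1, by cases m <;> simp_all⟩
    rw [pow_succ]; omega
  have hsqr : 8 * 2 ^ m ≤ 2 ^ m * 2 ^ m := Nat.mul_le_mul_right _ (by omega)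
  have ha : 2 ^ (m + 1) - 3 ∈ (oddUpTo M).erase (2 ^ (m + 1) - 1) :=
    mem_erase_oddUpTo.2 ⟨by omega, by omega, by omega⟩
  have hb : 3 * 2 ^ m - 1 ∈ (oddUpTo M).erase (2 ^ (m + 1) - 1) :=
    mem_erase_oddUpTo.2 ⟨by omega, by omega, by omega⟩
  have hab : 2 ^ (m + 1) - 3 ≠ 3 * 2 ^ m - 1 := by omega
  have hsum : (2 ^ (m + 1) - 3) * 2 ^ m + (3 * 2 ^ m - 1) * 1 = 2 ^ (2 * m + 1) - 1 := by
    rw [h2m, hsq]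
    zify [(by omega : 3 ≤ 2 * 2 ^ m), (by omega : 1 ≤ 3 * 2 ^ m),
      (by omega : 1 ≤ 2 * (2 ^ m * 2 ^ m))]
    ring
  refine ⟨2 * m + 1, sol2 (2 ^ (m + 1) - 3) (2 ^ m) (3 * 2 ^ m - 1) 1,
    isSolution_sol2 (by omega) ha hb hab (by omega) (by omega) (by rw [hsum]) (by omega), ?_⟩
  rw [weight_sol2 ha hb hab, s2_two_pow, ← pow_zero 2, s2_two_pow]
  ring

end CaseII

/-- For `n` large enough and odd `d` with `3·2^{n−1} − 1 ≤ d < 2^{n+1} − 7`, the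
2-density of `D = {i : 1 ≤ i ≤ d, i odd} \ {2^n − 1}` is `2/(2n−1)`: every solution of
length `ℓ` satisfies `(2n−1)·s(U) ≥ 2ℓ`, and some solution attains equality. -/
theorem density_case_ii :
    ∃ N : ℕ, ∀ n : ℕ, N ≤ n → ∀ d : ℕ, d % 2 = 1 →
      3 * 2 ^ (n - 1) - 1 ≤ d → d < 2 ^ (n + 1) - 7 →
      (∀ ℓ U, IsSolution ((oddUpTo d).erase (2 ^ n - 1)) ℓ U →
        2 * ℓ ≤ (2 * n - 1) * weight ((oddUpTo d).erase (2 ^ n - 1)) U) ∧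
      (∃ ℓ U, IsSolution ((oddUpTo d).erase (2 ^ n - 1)) ℓ U ∧
        2 * ℓ = (2 * n - 1) * weight ((oddUpTo d).erase (2 ^ n - 1)) U) := by
  refine ⟨5, fun n hn d hd hd_lo hd_hi ↦ ?_⟩
  obtain ⟨m, rfl⟩ : ∃ m, n = m + 1 := ⟨n - 1, by omega⟩
  have hM1 : 3 * 2 ^ m ≤ d + 1 := by simpa using hd_lo
  have hM2 : d + 9 ≤ 4 * 2 ^ m := by
    have : 2 ^ (m + 1 + 1) = 4 * 2 ^ m := by ring
    omega
  rw [show 2 * (m + 1) - 1 = 2 * m + 1 by omega]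
  exact ⟨fun ℓ U ↦ CaseII.two_mul_le_mul_weight (by omega) hM1 hM2 hd,
    CaseII.exists_two_mul_eq_mul_weight hM1 hM2⟩
end

section
/- There exists N such that for all n ≥ N and every odd integer d with 3·2^{n−1} − 1 ≤ d < 2^{n+1} − 7, the 2-density of the set D := {i : 1 ≤ i ≤ d, i odd} \ {2^n − 3, 2^n − 1} equals 1/(n−1); that is, every solution U of any length ℓ for D satisfies (n−1)·s(U) ≥ ℓ, and some solution attains (n−1)·s(U) = ℓ. -/
/-!
Along the orbit of a solution `U` under the shift, the support map `ψ` satisfies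
`2 ψ(k) = ψ(k+1) + ∑_{d ∈ T_k} d`, where `T_k` is the set of `d` for which the `k`-th shift
of `u_d` has its top bit set. Over one period the sets `T_k` meet every binary digit of every
`u_d` once, so `∑_k |T_k| = s(U)`. The potential `θ(ψ) = ⌊log₂ ψ⌋`, lowered by one unless `ψ`
is a power of two, satisfies `θ(ψ(k)) + 1 ≤ (n-1)|T_k| + θ(ψ(k+1))` at every step: a single
top `a` could only spoil this when `ψ(k)` is `2^(n-1)` or `2^n` and `ψ(k+1)` is tiny, which is
what `a ≤ 2^(n+1) - 8` and `a ∉ {2^n - 1, 2^n - 3}` rule out. Summing over a period gives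
`ℓ ≤ (n-1) s(U)`, and `u_{2^(n-1)-1} = 1` of length `n - 1` attains equality.
-/

open Finset

namespace TwoDensity

theorem s2_zero : s2 0 = 0 := by simp [s2]

theorem s2_two_mul_add {b : ℕ} (hb : b < 2) (m : ℕ) : s2 (2 * m + b) = s2 m + b := by
  rcases Nat.eq_zero_or_pos m with rfl | hm
  · interval_cases b <;> simp [s2]
  · rw [s2, add_comm, Nat.digits_add 2 (by norm_num) b m hb (Or.inr hm.ne'), List.sum_cons, s2,
      add_comm]

section Shift

variable {ℓ : ℕ}

def topBit (ℓ u : ℕ) : ℕ := if 2 ^ (ℓ - 1) ≤ u then 1 else 0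

theorem topBit_lt_two (u : ℕ) : topBit ℓ u < 2 := by
  unfold topBit; split <;> omega

theorem two_mul_eq_shift2_add {u : ℕ} (hu : u ≤ 2 ^ ℓ - 1) :
    2 * u = shift2 ℓ u + (2 ^ ℓ - 1) * topBit ℓ u := by
  rcases ℓ with _ | m
  · simp_all [shift2]
  have h2 : 2 ^ (m + 1) = 2 * 2 ^ m := by ring
  simp only [shift2, topBit, Nat.add_sub_cancel]
  split_ifs
  · omega
  · omega
  · rw [Nat.mod_eq_sub_mod (by omega), Nat.mod_eq_of_lt (by omega)]
    omega
  · rw [Nat.mod_eq_of_lt (by omega)]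
    omega

theorem shift2_lt {u : ℕ} (hu : u < 2 ^ ℓ - 1) : shift2 ℓ u < 2 ^ ℓ - 1 := by
  rw [shift2, if_neg hu.ne]
  exact Nat.mod_lt _ (by omega)

theorem shift2_le {u : ℕ} (hu : u ≤ 2 ^ ℓ - 1) : shift2 ℓ u ≤ 2 ^ ℓ - 1 := by
  rcases hu.eq_or_lt with rfl | hu
  · simp [shift2]
  · exact (shift2_lt hu).le

theorem shift2_pos {u : ℕ} (hu0 : 0 < u) (hu : u ≤ 2 ^ ℓ - 1) : 0 < shift2 ℓ u := by
  rcases ℓ with _ | m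
  · simp at hu; omega
  have h2 : 2 ^ (m + 1) = 2 * 2 ^ m := by ring
  have h := two_mul_eq_shift2_add hu
  have ht := topBit_lt_two (ℓ := m + 1) u
  interval_cases topBit (m + 1) u <;> omega

theorem iterate_shift2_le {u : ℕ} (hu : u ≤ 2 ^ ℓ - 1) (k : ℕ) :
    (shift2 ℓ)^[k] u ≤ 2 ^ ℓ - 1 :=
  Set.MapsTo.iterate (f := shift2 ℓ) (s := {u | u ≤ 2 ^ ℓ - 1}) (fun _ => shift2_le) k hu

theorem iterate_shift2_lt {u : ℕ} (hu : u < 2 ^ ℓ - 1) (k : ℕ) :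
    (shift2 ℓ)^[k] u < 2 ^ ℓ - 1 :=
  Set.MapsTo.iterate (f := shift2 ℓ) (s := {u | u < 2 ^ ℓ - 1}) (fun _ => shift2_lt) k hu

theorem iterate_shift2_pos {u : ℕ} (hu0 : 0 < u) (hu : u ≤ 2 ^ ℓ - 1) (k : ℕ) :
    0 < (shift2 ℓ)^[k] u :=
  (Set.MapsTo.iterate (f := shift2 ℓ) (s := {u | 0 < u ∧ u ≤ 2 ^ ℓ - 1})
    (fun _ hv => ⟨shift2_pos hv.1 hv.2, shift2_le hv.2⟩) k ⟨hu0, hu⟩).1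

/-- `P` is the number whose binary digits are the top bits read along the orbit of `u`. -/
theorem exists_two_pow_mul_eq_iterate_shift2_add {u : ℕ} (hu : u ≤ 2 ^ ℓ - 1) (k : ℕ) :
    ∃ P, 2 ^ k * u = (shift2 ℓ)^[k] u + (2 ^ ℓ - 1) * P ∧
      s2 P = ∑ j ∈ range k, topBit ℓ ((shift2 ℓ)^[j] u) := by
  induction k with
  | zero => exact ⟨0, by simp, by simp [s2_zero]⟩
  | succ k ih =>
    obtain ⟨P, hP, hs⟩ := ih
    have h := two_mul_eq_shift2_add (iterate_shift2_le hu k)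
    refine ⟨2 * P + topBit ℓ ((shift2 ℓ)^[k] u), ?_, ?_⟩
    · rw [Function.iterate_succ_apply']
      calc 2 ^ (k + 1) * u = 2 * (2 ^ k * u) := by ring
        _ = 2 * (shift2 ℓ)^[k] u + (2 ^ ℓ - 1) * (2 * P) := by rw [hP]; ring
        _ = _ := by rw [h]; ring
    · rw [s2_two_mul_add (topBit_lt_two _), hs, sum_range_succ]

theorem iterate_shift2_length {u : ℕ} (hu : u ≤ 2 ^ ℓ - 1) : (shift2 ℓ)^[ℓ] u = u := by
  rcases hu.eq_or_lt with rfl | hu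
  · exact Function.iterate_fixed (by simp [shift2]) ℓ
  obtain ⟨P, hP, -⟩ := exists_two_pow_mul_eq_iterate_shift2_add hu.le ℓ
  have hx := iterate_shift2_lt hu ℓ
  set q := 2 ^ ℓ - 1
  have h : u + q * u = (shift2 ℓ)^[ℓ] u + q * P := by
    rw [← hP, show 2 ^ ℓ = q + 1 by omega]; ring
  have := congrArg (· % q) h
  simpa [Nat.add_mul_mod_self_left, Nat.mod_eq_of_lt hu, Nat.mod_eq_of_lt hx] using this.symm

theorem sum_topBit_iterate_shift2 (hl : 1 ≤ ℓ) {u : ℕ} (hu : u ≤ 2 ^ ℓ - 1) :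
    ∑ k ∈ range ℓ, topBit ℓ ((shift2 ℓ)^[k] u) = s2 u := by
  obtain ⟨P, hP, hs⟩ := exists_two_pow_mul_eq_iterate_shift2_add hu ℓ
  rw [iterate_shift2_length hu] at hP
  set q := 2 ^ ℓ - 1
  have hq : 0 < q := by have := Nat.pow_le_pow_right two_pos hl; omega
  rw [show 2 ^ ℓ = q + 1 by omega] at hP
  rw [← hs, Nat.eq_of_mul_eq_mul_left hq (by linarith : q * u = q * P)]

end Shift

section Solution

variable {D : Finset ℕ} {ℓ : ℕ} {U : ℕ → ℕ}

def tops (D : Finset ℕ) (ℓ : ℕ) (U : ℕ → ℕ) (k : ℕ) : Finset ℕ :=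
  D.filter fun d => 2 ^ (ℓ - 1) ≤ (shift2 ℓ)^[k] (U d)

theorem sum_card_tops (hU : IsSolution D ℓ U) : ∑ k ∈ range ℓ, #(tops D ℓ U k) = weight D U := by
  simp only [tops, card_filter]
  rw [sum_comm]
  exact sum_congr rfl fun d _ => sum_topBit_iterate_shift2 hU.len_pos (hU.bounded d)

theorem two_mul_sum_iterate_shift2 (hU : IsSolution D ℓ U) (k : ℕ) :
    2 * ∑ d ∈ D, d * (shift2 ℓ)^[k] (U d) =
      ∑ d ∈ D, d * (shift2 ℓ)^[k + 1] (U d) + (2 ^ ℓ - 1) * ∑ d ∈ tops D ℓ U k, d := by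
  rw [tops, sum_filter, mul_sum, mul_sum, ← sum_add_distrib]
  refine sum_congr rfl fun d _ => ?_
  rw [Function.iterate_succ_apply', mul_left_comm,
    two_mul_eq_shift2_add (iterate_shift2_le (hU.bounded d) k), topBit]
  split_ifs <;> ring

theorem dvd_sum_iterate_shift2 (hU : IsSolution D ℓ U) (k : ℕ) :
    2 ^ ℓ - 1 ∣ ∑ d ∈ D, d * (shift2 ℓ)^[k] (U d) := by
  induction k with
  | zero => simpa using hU.dvd
  | succ k ih =>
    refine (Nat.dvd_add_left (dvd_mul_right _ (∑ d ∈ tops D ℓ U k, d))).mp ?_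
    rw [← two_mul_sum_iterate_shift2 hU k]
    exact dvd_mul_of_dvd_right ih 2

theorem two_mul_supportMap (hU : IsSolution D ℓ U) (k : ℕ) :
    2 * supportMap D ℓ U k = supportMap D ℓ U (k + 1) + ∑ d ∈ tops D ℓ U k, d := by
  have hq : 0 < 2 ^ ℓ - 1 := by have := Nat.pow_le_pow_right two_pos hU.len_pos; omega
  have h := two_mul_sum_iterate_shift2 hU k
  obtain ⟨a, ha⟩ := dvd_sum_iterate_shift2 hU k
  obtain ⟨b, hb⟩ := dvd_sum_iterate_shift2 hU (k + 1)
  rw [ha, hb] at h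
  simp only [supportMap, ha, hb, Nat.mul_div_cancel_left _ hq]
  exact Nat.eq_of_mul_eq_mul_left hq (by linarith)

theorem one_le_supportMap (hU : IsSolution D ℓ U) (k : ℕ) : 1 ≤ supportMap D ℓ U k := by
  have hq : 0 < 2 ^ ℓ - 1 := by have := Nat.pow_le_pow_right two_pos hU.len_pos; omega
  obtain ⟨d, hd, hne⟩ := exists_ne_zero_of_sum_ne_zero hU.pos.ne'
  obtain ⟨hd0, hu0⟩ := Nat.mul_ne_zero_iff.mp hne
  have hterm : 0 < d * (shift2 ℓ)^[k] (U d) :=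
    Nat.mul_pos (Nat.pos_of_ne_zero hd0)
      (iterate_shift2_pos (Nat.pos_of_ne_zero hu0) (hU.bounded d) k)
  rw [supportMap, Nat.one_le_div_iff hq]
  refine Nat.le_of_dvd (hterm.trans_le ?_) (dvd_sum_iterate_shift2 hU k)
  exact single_le_sum (f := fun d => d * (shift2 ℓ)^[k] (U d)) (fun _ _ => Nat.zero_le _) hd

theorem supportMap_length (hU : IsSolution D ℓ U) : supportMap D ℓ U ℓ = supportMap D ℓ U 0 := by
  simp only [supportMap, Function.iterate_zero_apply]
  rw [sum_congr rfl fun d _ => by rw [iterate_shift2_length (hU.bounded d)]]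

end Solution

section Potential

def potential (ψ : ℕ) : ℕ := if ψ = 2 ^ Nat.log 2 ψ then Nat.log 2 ψ else Nat.log 2 ψ - 1

theorem potential_le_log (ψ : ℕ) : potential ψ ≤ Nat.log 2 ψ := by
  unfold potential; split <;> omega

theorem log_le_potential_add_one (ψ : ℕ) : Nat.log 2 ψ ≤ potential ψ + 1 := by
  unfold potential; split <;> omega

theorem potential_two_pow (k : ℕ) : potential (2 ^ k) = k := by
  simp [potential, Nat.log_pow one_lt_two]

theorem potential_two_mul {ψ : ℕ} (hψ : ψ ≠ 0) : potential (2 * ψ) = potential ψ + 1 := by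
  have hlog : Nat.log 2 (2 * ψ) = Nat.log 2 ψ + 1 := by
    rw [mul_comm]; exact Nat.log_mul_base one_lt_two hψ
  have hpow := Nat.pow_log_le_self 2 hψ
  simp only [potential, hlog, pow_succ]
  split_ifs with h h' h' <;> try omega
  have : ψ ≠ 1 := fun h1 => h' (by simp [h1])
  have : 1 ≤ Nat.log 2 ψ := Nat.le_log_of_pow_le one_lt_two (by omega)
  omega

theorem le_potential_of_two_pow_le {k ψ : ℕ} (h : 2 ^ (k + 1) ≤ ψ) : k ≤ potential ψ := by
  have := Nat.le_log_of_pow_le one_lt_two h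
  have := log_le_potential_add_one ψ
  omega

theorem potential_le_sub_two {k ψ : ℕ} (h : ψ < 2 ^ k) (hne : ψ ≠ 2 ^ (k - 1)) :
    potential ψ ≤ k - 2 := by
  rcases Nat.eq_zero_or_pos ψ with rfl | hψ
  · simp [potential]
  have hlog := Nat.log_lt_of_lt_pow hψ.ne' h
  unfold potential
  split_ifs with hp
  · have : Nat.log 2 ψ ≠ k - 1 := fun hk => hne (by rw [hp, hk])
    omega
  · omega

theorem potential_le_succ_of_two_mul_eq_add {ψ ψ' S : ℕ} (hψ : ψ ≠ 0) (h : 2 * ψ = ψ' + S)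
    (hS : S ≤ 2 ^ Nat.log 2 ψ) : potential ψ ≤ potential ψ' + 1 := by
  have hpow := Nat.pow_log_le_self 2 hψ
  have hlog : Nat.log 2 ψ ≤ Nat.log 2 ψ' := Nat.le_log_of_pow_le one_lt_two (by omega)
  have := potential_le_log ψ
  have := log_le_potential_add_one ψ'
  omega

end Potential

section Step

variable {n ψ ψ' : ℕ}

theorem potential_step_of_card_eq_one {a : ℕ} (hn : 3 ≤ n) (ha : a % 2 = 1)
    (ha_le : a ≤ 2 ^ (n + 1) - 8) (ha₁ : a ≠ 2 ^ n - 1) (ha₃ : a ≠ 2 ^ n - 3) (hψ : 1 ≤ ψ)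
    (h : 2 * ψ = ψ' + a) : potential ψ + 1 ≤ n - 1 + potential ψ' := by
  have h2n : 2 ^ n = 2 * 2 ^ (n - 1) := by rw [← pow_succ']; congr 1; omega
  have h2n1 : 2 ^ (n + 1) = 2 * 2 ^ n := pow_succ' 2 n
  have h2n2 : 4 ≤ 2 ^ (n - 1) :=
    (Nat.pow_le_pow_right two_pos (by omega : 2 ≤ n - 1)).trans_eq' (by norm_num)
  by_cases hlt : ψ < 2 ^ n
  · by_cases hmid : ψ = 2 ^ (n - 1)
    · have : 1 ≤ potential ψ' := le_potential_of_two_pow_le (by norm_num; omega)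
      rw [hmid, potential_two_pow]
      omega
    · have := potential_le_sub_two hlt hmid
      omega
  by_cases hlt' : ψ < 2 ^ (n + 1)
  · by_cases htop : ψ = 2 ^ n
    · have : 2 ≤ potential ψ' := le_potential_of_two_pow_le (by norm_num; omega)
      rw [htop, potential_two_pow]
      omega
    · have := potential_le_sub_two hlt' htop
      have : 1 ≤ potential ψ' := le_potential_of_two_pow_le (by norm_num; omega)
      omega
  have hlog : n + 1 ≤ Nat.log 2 ψ := Nat.le_log_of_pow_le one_lt_two (by omega)
  have := potential_le_succ_of_two_mul_eq_add (by omega) h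
    ((by omega : a ≤ 2 ^ (n + 1)).trans (Nat.pow_le_pow_right two_pos hlog))
  omega

theorem potential_step_of_two_le_card {c S : ℕ} (hn : 4 ≤ n) (hc : 2 ≤ c)
    (hS : S ≤ c * 2 ^ (n + 1)) (hψ : 1 ≤ ψ) (h : 2 * ψ = ψ' + S) :
    potential ψ + 1 ≤ (n - 1) * c + potential ψ' := by
  have hnc : n + c ≤ (n - 1) * c := by
    obtain ⟨m, rfl⟩ : ∃ m, n = m + 4 := ⟨n - 4, by omega⟩
    rw [show m + 4 - 1 = m + 3 by omega]
    nlinarith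
  by_cases hlt : ψ < 2 ^ (n + c)
  · have := Nat.log_lt_of_lt_pow (by omega) hlt
    have := potential_le_log ψ
    omega
  have hlog : n + c ≤ Nat.log 2 ψ := Nat.le_log_of_pow_le one_lt_two (by omega)
  have hc_le : c ≤ 2 ^ (c - 1) := by have := Nat.lt_two_pow_self (n := c - 1); omega
  have hS' : S ≤ 2 ^ Nat.log 2 ψ :=
    calc S ≤ c * 2 ^ (n + 1) := hS
      _ ≤ 2 ^ (c - 1) * 2 ^ (n + 1) := Nat.mul_le_mul_right _ hc_le
      _ = 2 ^ (n + c) := by rw [← pow_add]; congr 1; omega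
      _ ≤ 2 ^ Nat.log 2 ψ := Nat.pow_le_pow_right two_pos hlog
  have := potential_le_succ_of_two_mul_eq_add (by omega) h hS'
  omega

theorem potential_step (hn : 4 ≤ n) {T : Finset ℕ}
    (hT : ∀ e ∈ T, e % 2 = 1 ∧ e ≤ 2 ^ (n + 1) - 8 ∧ e ≠ 2 ^ n - 1 ∧ e ≠ 2 ^ n - 3)
    (hψ : 1 ≤ ψ) (h : 2 * ψ = ψ' + ∑ e ∈ T, e) :
    potential ψ + 1 ≤ (n - 1) * #T + potential ψ' := by
  obtain hT0 | hT1 | hT2 : #T = 0 ∨ #T = 1 ∨ 2 ≤ #T := by omega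
  · rw [card_eq_zero.mp hT0, sum_empty, add_zero] at h
    rw [hT0, ← h, potential_two_mul (by omega)]
    omega
  · obtain ⟨a, rfl⟩ := card_eq_one.mp hT1
    obtain ⟨ha, ha_le, ha₁, ha₃⟩ := hT a (mem_singleton_self a)
    rw [sum_singleton] at h
    rw [hT1, mul_one]
    exact potential_step_of_card_eq_one (by omega) ha ha_le ha₁ ha₃ hψ h
  · refine potential_step_of_two_le_card hn hT2 ?_ hψ h
    calc ∑ e ∈ T, e ≤ #T • 2 ^ (n + 1) := sum_le_card_nsmul T (fun e => e) _ fun e he =>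
          (hT e he).2.1.trans (Nat.sub_le _ _)
      _ = #T * 2 ^ (n + 1) := smul_eq_mul _ _

end Step

theorem le_mul_weight_of_isSolution {n : ℕ} (hn : 4 ≤ n) {D : Finset ℕ}
    (hD : ∀ e ∈ D, e % 2 = 1 ∧ e ≤ 2 ^ (n + 1) - 8 ∧ e ≠ 2 ^ n - 1 ∧ e ≠ 2 ^ n - 3)
    {ℓ : ℕ} {U : ℕ → ℕ} (hU : IsSolution D ℓ U) : ℓ ≤ (n - 1) * weight D U := by
  set ψ := supportMap D ℓ U
  have hstep : ∀ k ∈ range ℓ,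
      potential (ψ k) + 1 ≤ (n - 1) * #(tops D ℓ U k) + potential (ψ (k + 1)) := fun k _ =>
    potential_step hn (fun e he => hD e (mem_filter.mp he).1) (one_le_supportMap hU k)
      (two_mul_supportMap hU k)
  have hperiod : ∑ k ∈ range ℓ, potential (ψ (k + 1)) = ∑ k ∈ range ℓ, potential (ψ k) := by
    have h₁ := sum_range_succ' (fun k => potential (ψ k)) ℓ
    have h₂ := sum_range_succ (fun k => potential (ψ k)) ℓ
    rw [show ψ ℓ = ψ 0 from supportMap_length hU] at h₂
    omega
  have := sum_le_sum hstep
  rw [sum_add_distrib, sum_add_distrib, ← mul_sum, sum_card_tops hU, hperiod] at this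
  simp only [sum_const, card_range, smul_eq_mul, mul_one] at this
  omega

theorem isSolution_sol1 {D : Finset ℕ} {ℓ a : ℕ} (hl : 1 ≤ ℓ) (ha : a ∈ D) (ha0 : 0 < a)
    (hdvd : 2 ^ ℓ - 1 ∣ a) : IsSolution D ℓ (sol1 a) where
  len_pos := hl
  bounded d := by
    have := Nat.pow_le_pow_right two_pos hl
    unfold sol1; split <;> omega
  supp_sub d hd := if_neg (ne_of_mem_of_not_mem ha hd).symm
  dvd := by simpa [sol1, ha] using hdvd
  pos := by simpa [sol1, ha] using ha0

theorem weight_sol1 {D : Finset ℕ} {a : ℕ} (ha : a ∈ D) : weight D (sol1 a) = 1 := by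
  rw [weight, sum_eq_single_of_mem a ha fun d _ hd => by simp [sol1, hd, s2_zero]]
  simp [sol1, s2]

end TwoDensity

/-- For `n` large enough and odd `d` with `3·2^{n−1} − 1 ≤ d < 2^{n+1} − 7`, the
2-density of `D = {i : 1 ≤ i ≤ d, i odd} \ {2^n − 3, 2^n − 1}` is `1/(n−1)`: every
solution of length `ℓ` satisfies `(n−1)·s(U) ≥ ℓ`, and some solution attains
equality. -/
theorem density_case_ii_b :
    ∃ N : ℕ, ∀ n : ℕ, N ≤ n → ∀ d : ℕ, d % 2 = 1 →
      3 * 2 ^ (n - 1) - 1 ≤ d → d < 2 ^ (n + 1) - 7 →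
      (∀ ℓ U, IsSolution (((oddUpTo d).erase (2 ^ n - 3)).erase (2 ^ n - 1)) ℓ U →
        ℓ ≤ (n - 1) * weight (((oddUpTo d).erase (2 ^ n - 3)).erase (2 ^ n - 1)) U) ∧
      (∃ ℓ U, IsSolution (((oddUpTo d).erase (2 ^ n - 3)).erase (2 ^ n - 1)) ℓ U ∧
        ℓ = (n - 1) * weight (((oddUpTo d).erase (2 ^ n - 3)).erase (2 ^ n - 1)) U) := by
  refine ⟨4, fun n hn d _ hd_lo hd_hi =>
    ⟨fun ℓ U hU => TwoDensity.le_mul_weight_of_isSolution hn ?_ hU, ?_⟩⟩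
  · intro e he
    simp only [oddUpTo, mem_erase, mem_filter, mem_range] at he
    omega
  · have h2n : 2 ^ n = 2 * 2 ^ (n - 1) := by rw [← pow_succ']; congr 1; omega
    have h2n1 : 2 ^ (n - 1) = 2 * 2 ^ (n - 2) := by rw [← pow_succ']; congr 1; omega
    have h2n2 : 4 ≤ 2 ^ (n - 2) :=
      (Nat.pow_le_pow_right two_pos (by omega : 2 ≤ n - 2)).trans_eq' (by norm_num)
    have ha : 2 ^ (n - 1) - 1 ∈ ((oddUpTo d).erase (2 ^ n - 3)).erase (2 ^ n - 1) := by
      simp only [oddUpTo, mem_erase, mem_filter, mem_range]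
      omega
    refine ⟨n - 1, sol1 (2 ^ (n - 1) - 1),
      TwoDensity.isSolution_sol1 (by omega) ha (by omega) dvd_rfl, ?_⟩
    rw [TwoDensity.weight_sol1 ha, mul_one]
end

section
/- There exists N such that for all n ≥ N the following holds. Let a ≥ 1, q = 2^a, and let f(x) = ∑_{i=0}^{g} c_{2i+1} x^{2i+1} ∈ F_q[x] with c_{2g+1} ≠ 0, where 2^n − 1 < 2g + 1 < 3·2^{n−1} − 1. If c_{2^n − 1} = 0, then for every m ≥ 1 the integer S_m(f) is divisible by 2^{⌈a·m/(n−1)⌉} (i.e. the first slope of the associated Newton polygon is at least 1/(n−1)). -/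
/-!
Choose an `𝔽₂`-basis `b` of `L = 𝔽_{q^m}` and write `x = ∑ yᵢ bᵢ`. Since Frobenius is
`𝔽₂`-linear, `x ^ (∑_{j ∈ S} 2 ^ j) = ∏_{j ∈ S} ∑ᵢ yᵢ bᵢ ^ 2 ^ j`, so `Tr (c x ^ k)` is a Boolean
polynomial in the coordinates `y` of degree at most the binary weight of `k`. Every odd
`k < 3·2^(n-1) - 1` other than `2^n - 1` has binary weight at most `n - 1`, so `Tr (f x)` has
degree `d ≤ n - 1`.

For a Boolean polynomial `F = ∑ⱼ aⱼ ∏_{i ∈ Tⱼ} yᵢ` in `v` variables, expanding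
`(-1)^F = ∏ⱼ (1 - 2 aⱼ ∏ yᵢ)` gives `∑_y (-1)^F(y) = ∑_t (-2)^|t| 2^(v - |⋃_{j ∈ t} Tⱼ|)`, summed
over the sets `t` of monomials with nonzero coefficients. As `|⋃ Tⱼ| ≤ d |t|`, every term is
divisible by `2^⌈v/d⌉`; here `v = a m`.
-/

open Finset

lemma two_pow_card_le_sum_two_pow_add_one (S : Finset ℕ) : 2 ^ #S ≤ ∑ j ∈ S, 2 ^ j + 1 := by
  induction S using Finset.induction_on_max with
  | empty => simp
  | insert a s has ih =>
    have hsa : #s ≤ a := by simpa using card_le_card fun x hx => mem_range.2 (has x hx)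
    have := Nat.pow_le_pow_right two_pos hsa
    have ha : a ∉ s := fun h => (has a h).false
    rw [card_insert_of_notMem ha, sum_insert ha, pow_succ]
    omega

lemma card_le_of_sum_two_pow_lt {S : Finset ℕ} {n : ℕ} (hn : 1 ≤ n)
    (hlt : ∑ j ∈ S, 2 ^ j < 3 * 2 ^ (n - 1) - 1) (hne : ∑ j ∈ S, 2 ^ j ≠ 2 ^ n - 1) :
    #S ≤ n - 1 := by
  by_contra! hS
  have hS0 : S.Nonempty := card_pos.1 (by omega)
  set M := S.max' hS0
  have hM : M ∈ S := S.max'_mem hS0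
  have h2n : 2 ^ n = 2 * 2 ^ (n - 1) := by rw [← pow_succ']; congr 1; omega
  by_cases hMn : n ≤ M
  · have h1 := two_pow_card_le_sum_two_pow_add_one (S.erase M)
    have h2 := Nat.pow_le_pow_right two_pos hMn
    have h3 := Nat.pow_le_pow_right two_pos (show n - 1 ≤ #(S.erase M) by
      rw [card_erase_of_mem hM]; omega)
    rw [← add_sum_erase S _ hM] at hlt
    omega
  · have hsub : S ⊆ range n := fun x hx => mem_range.2 (by have := S.le_max' x hx; omega)
    have hSn : S = range n := eq_of_subset_of_card_le hsub (by simp; omega)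
    rw [hSn, Nat.geomSum_eq le_rfl] at hne
    simp at hne

section BooleanPolynomial

variable {σ ι : Type*} [Fintype σ] [DecidableEq σ]

lemma card_filter_forall_ne_zero (U : Finset σ) :
    #{y : σ → ZMod 2 | ∀ i ∈ U, y i ≠ 0} = 2 ^ (Fintype.card σ - #U) := by
  have : ({y : σ → ZMod 2 | ∀ i ∈ U, y i ≠ 0} : Finset _)
      = Fintype.piFinset fun i => if i ∈ U then {0}ᶜ else univ := by
    ext y; simp only [mem_filter, mem_univ, true_and, Fintype.mem_piFinset]
    refine ⟨fun h i => ?_, fun h i hi => by simpa [hi] using h i⟩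
    split_ifs with hi <;> simp [h i, hi]
  rw [this, Fintype.card_piFinset]
  simp [apply_ite, prod_ite, filter_not, card_univ_sdiff, card_compl]

lemma neg_one_pow_val_sum (s : Finset ι) (f : ι → ZMod 2) :
    (-1 : ℤ) ^ (∑ j ∈ s, f j).val = ∏ j ∈ s, (1 + -2 * if f j ≠ 0 then 1 else 0) := by
  have key : ∀ z w : ZMod 2,
      (-1 : ℤ) ^ (z + w).val = (1 + -2 * if z ≠ 0 then 1 else 0) * (-1) ^ w.val := by decide
  induction s using Finset.cons_induction with
  | empty => simp
  | cons j s hj ih => rw [sum_cons, prod_cons, key, ih]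

lemma card_filter_forall_mul_prod_ne_zero (t : Finset ι) (T : ι → Finset σ)
    (a : ι → ZMod 2) :
    #{y : σ → ZMod 2 | ∀ j ∈ t, a j * ∏ i ∈ T j, y i ≠ 0}
      = if ∀ j ∈ t, a j ≠ 0 then 2 ^ (Fintype.card σ - #(t.biUnion T)) else 0 := by
  simp only [mul_ne_zero_iff, prod_ne_zero_iff, forall_and]
  split_ifs with ha
  · rw [← card_filter_forall_ne_zero]
    congr 2 with y
    grind
  · simp [ha]

lemma sum_neg_one_pow_val_eq (s : Finset ι) (T : ι → Finset σ) (a : ι → ZMod 2) :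
    ∑ y : σ → ZMod 2, (-1 : ℤ) ^ (∑ j ∈ s, a j * ∏ i ∈ T j, y i).val
      = ∑ t ∈ s.powerset, (-2) ^ #t *
          if ∀ j ∈ t, a j ≠ 0 then 2 ^ (Fintype.card σ - #(t.biUnion T)) else 0 := by
  simp_rw [neg_one_pow_val_sum, prod_one_add, prod_mul_distrib, prod_const, prod_boole]
  rw [sum_comm]
  refine sum_congr rfl fun t _ => ?_
  rw [← mul_sum, sum_boole, card_filter_forall_mul_prod_ne_zero]
  push_cast
  rfl

lemma ceil_div_le_add_sub {u v d k : ℕ} (hud : u ≤ d * k) (huv : u ≤ v) :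
    ⌈(v : ℚ) / d⌉₊ ≤ k + (v - u) := by
  rcases Nat.eq_zero_or_pos d with rfl | hd
  · simp
  rw [Nat.ceil_le, div_le_iff₀ (by exact_mod_cast hd)]
  have : v ≤ (k + (v - u)) * d := by nlinarith [Nat.sub_add_cancel huv]
  exact_mod_cast this

theorem two_pow_ceil_dvd_sum_neg_one_pow_val (s : Finset ι) (T : ι → Finset σ)
    (a : ι → ZMod 2) {d : ℕ} (hT : ∀ j ∈ s, a j ≠ 0 → #(T j) ≤ d) :
    (2 : ℤ) ^ ⌈(Fintype.card σ : ℚ) / d⌉₊ ∣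
      ∑ y : σ → ZMod 2, (-1 : ℤ) ^ (∑ j ∈ s, a j * ∏ i ∈ T j, y i).val := by
  rw [sum_neg_one_pow_val_eq]
  refine dvd_sum fun t ht => ?_
  split_ifs with ha
  · have hU : #(t.biUnion T) ≤ d * #t := calc
      #(t.biUnion T) ≤ ∑ j ∈ t, #(T j) := card_biUnion_le
      _ ≤ ∑ _j ∈ t, d := sum_le_sum fun j hj => hT j (mem_powerset.1 ht hj) (ha j hj)
      _ = d * #t := by rw [sum_const, smul_eq_mul, mul_comm]
    refine dvd_trans (pow_dvd_pow (2 : ℤ) (ceil_div_le_add_sub hU (card_le_univ _))) ?_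
    rw [pow_add, neg_pow, mul_assoc]
    exact dvd_mul_left _ _
  · simp

end BooleanPolynomial

lemma Finset.prod_image_zmod_two {α β : Type*} [DecidableEq β] (s : Finset α) (p : α → β)
    (y : β → ZMod 2) : ∏ i ∈ s.image p, y i = ∏ j ∈ s, y (p j) := by
  have eq_of_ne_zero_iff : ∀ z w : ZMod 2, (z ≠ 0 ↔ w ≠ 0) → z = w := by decide
  exact eq_of_ne_zero_iff _ _ (by simp [prod_ne_zero_iff])

section Frobenius

variable {L σ : Type*} [Field L] [Algebra (ZMod 2) L] [Fintype σ]
  (b : Module.Basis σ (ZMod 2) L)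

lemma pow_two_pow_eq_sum_basis (x : L) (j : ℕ) :
    x ^ 2 ^ j = ∑ i, algebraMap (ZMod 2) L (b.equivFun x i) * b i ^ 2 ^ j := by
  have : CharP L 2 := charP_of_injective_algebraMap (algebraMap (ZMod 2) L).injective 2
  conv_lhs => rw [← b.sum_equivFun x]
  simp_rw [sum_pow_char_pow, Algebra.smul_def, mul_pow, ← map_pow, ZMod.pow_card_pow]

lemma trace_mul_pow_sum_two_pow [DecidableEq σ] [Fintype L] (S : Finset ℕ) (c x : L) :
    Algebra.trace (ZMod 2) L (c * x ^ ∑ j ∈ S, 2 ^ j)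
      = ∑ p : S → σ, Algebra.trace (ZMod 2) L (c * ∏ j : S, b (p j) ^ 2 ^ (j : ℕ)) *
          ∏ i ∈ univ.image p, b.equivFun x i := by
  rw [← prod_pow_eq_pow_sum, ← prod_coe_sort,
    Fintype.prod_congr _ _ fun j : S => pow_two_pow_eq_sum_basis b x j, prod_univ_sum, mul_sum,
    map_sum]
  refine sum_congr rfl fun p _ => ?_
  rw [prod_image_zmod_two, prod_mul_distrib, ← map_prod, mul_left_comm, ← Algebra.smul_def,
    map_smul, smul_eq_mul, mul_comm]

lemma trace_sum_mul_pow_eq_sum_sigma {ι : Type*} [DecidableEq σ] [Fintype L] (s : Finset ι)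
    (c : ι → L) (e : ι → ℕ) (x : L) :
    Algebra.trace (ZMod 2) L (∑ i ∈ s, c i * x ^ e i)
      = ∑ q ∈ s.sigma fun i => (univ : Finset ((e i).bitIndices.toFinset → σ)),
          Algebra.trace (ZMod 2) L (c q.1 * ∏ j, b (q.2 j) ^ 2 ^ (j : ℕ)) *
            ∏ l ∈ univ.image q.2, b.equivFun x l := by
  rw [map_sum, sum_sigma]
  refine sum_congr rfl fun i _ => ?_
  have := trace_mul_pow_sum_two_pow b (e i).bitIndices.toFinset (c i) x
  rwa [sum_toFinset_bitIndices_two_pow] at this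

end Frobenius

lemma Module.finrank_zmod_eq_mul {p a : ℕ} [Fact p.Prime] {K V : Type*} [Field K] [Fintype K]
    [AddCommGroup V] [Fintype V] [Module K V] [Module (ZMod p) V]
    (hK : Fintype.card K = p ^ a) : finrank (ZMod p) V = a * finrank K V := by
  apply Nat.pow_right_injective (Fact.out : p.Prime).two_le
  dsimp only
  rw [pow_mul, ← hK, ← Module.card_eq_pow_finrank, Module.card_eq_pow_finrank (K := ZMod p),
    ZMod.card]

/-- For `n` large enough: let `q = 2^a` (`a ≥ 1`), `K` a field with `q` elements,
`f(x) = ∑_{i=0}^g c_{2i+1} x^{2i+1} ∈ K[x]` with `c_{2g+1} ≠ 0` and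
`2^n − 1 < 2g + 1 < 3·2^{n−1} − 1`.  If `c_{2^n−1} = 0`, then for every `m ≥ 1` and
every degree-`m` extension `L/K`, the exponential sum
`S_m(f) = ∑_{x ∈ L} (−1)^{Tr_{L/F₂}(f(x))}` is divisible by `2^{⌈a·m/(n−1)⌉}`
(first slope at least `1/(n−1)`).  (The `F₂ = ZMod 2`-algebra structure on `L` is
unique since `L` has characteristic 2.) -/
theorem first_slope_case_i :
    ∃ N : ℕ, ∀ n : ℕ, N ≤ n → ∀ a : ℕ, 1 ≤ a →
      ∀ (K : Type) [Field K] [Fintype K], Fintype.card K = 2 ^ a →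
      ∀ g : ℕ, 2 ^ n - 1 < 2 * g + 1 → 2 * g + 1 < 3 * 2 ^ (n - 1) - 1 →
      ∀ c : ℕ → K, c (2 * g + 1) ≠ 0 → c (2 ^ n - 1) = 0 →
      ∀ m : ℕ, 1 ≤ m →
      ∀ (L : Type) [Field L] [Fintype L] [Algebra K L] [Algebra (ZMod 2) L],
        Module.finrank K L = m →
        (2 : ℤ) ^ (⌈(a * m : ℚ) / ((n : ℚ) - 1)⌉₊) ∣
          ∑ x : L, (-1 : ℤ) ^
            (Algebra.trace (ZMod 2) L
              (∑ i ∈ Finset.range (g + 1),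
                algebraMap K L (c (2 * i + 1)) * x ^ (2 * i + 1))).val := by
  classical
  refine ⟨1, fun n hn a _ K _ _ hK g _ hg c _ hc m _ L _ _ _ _ hm => ?_⟩
  let b := Module.finBasis (ZMod 2) L
  have hexp : ⌈(a * m : ℚ) / ((n : ℚ) - 1)⌉₊
      = ⌈(Fintype.card (Fin (Module.finrank (ZMod 2) L)) : ℚ) / (n - 1 : ℕ)⌉₊ := by
    rw [Fintype.card_fin, Module.finrank_zmod_eq_mul hK, hm, Nat.cast_sub hn]
    push_cast; rfl
  simp_rw [hexp, trace_sum_mul_pow_eq_sum_sigma b]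
  rw [← b.equivFun.toEquiv.symm.sum_comp]
  simp only [LinearEquiv.coe_toEquiv_symm, EquivLike.coe_coe, LinearEquiv.apply_symm_apply]
  refine two_pow_ceil_dvd_sum_neg_one_pow_val _ _ _ fun ⟨i, p⟩ hi hne => ?_
  have hci : c (2 * i + 1) ≠ 0 := fun h => hne (by simp [h])
  have hig : i < g + 1 := by simpa using (mem_sigma.1 hi).1
  calc #(univ.image p) ≤ #(2 * i + 1).bitIndices.toFinset := card_image_le.trans (by simp)
    _ ≤ n - 1 := card_le_of_sum_two_pow_lt hn (by rw [sum_toFinset_bitIndices_two_pow]; omega)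
        (by rw [sum_toFinset_bitIndices_two_pow]; exact fun h => hci (h ▸ hc))
end
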